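/- If F is a forest (a finite acyclic graph), then the independence complex I(F) is either contractible or homotopy equivalent to a sphere. In particular, the total dimension of the reduced cohomology of I(F) over ℚ is at most 1. -/

import Mathlib

open Finset

/-- An abstract simplicial complex on vertex type `V`, given by its set of faces
(downward closed). -/
structure SCpx (V : Type*) where
  faces : Set (Finset V)
  down : ∀ s t : Finset V, s ⊆ t → t ∈ faces → s ∈ faces

variable {V : Type*} [Fintype V] [DecidableEq V]

/-- The independence complex of a graph: faces are the independent sets. -/
def indepCpx (G : SimpleGraph V) : SCpx V where
  faces := {s | ∀ u ∈ s, ∀ v ∈ s, ¬ G.Adj u v}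
  down := fun s t hst ht u hu v hv => ht u (hst hu) v (hst hv)

/-- An enumeration of the vertices, used to fix orientation signs. -/
noncomputable def ordV (v : V) : ℕ := ((Fintype.equivFin V) v : ℕ)

/-- Reduced simplicial cochains: `cochain K d` is spanned by the faces of
cardinality `d` (so `d = 0` corresponds to the empty face, sitting in
reduced degree `-1`). -/
abbrev cochain (K : SCpx V) (d : ℕ) : Type _ :=
  {s : Finset V // s ∈ K.faces ∧ s.card = d} → ℚ

/-- The simplicial coboundary map on reduced cochains. -/
noncomputable def delta (K : SCpx V) (d : ℕ) : cochain K d →ₗ[ℚ] cochain K (d + 1) where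
  toFun f t := ∑ v ∈ t.1.attach,
    (-1 : ℚ) ^ ((t.1.filter fun w => ordV w < ordV v.1).card) *
      f ⟨t.1.erase v.1, K.down _ _ (Finset.erase_subset _ _) t.2.1, by
        simp [Finset.card_erase_of_mem v.2, t.2.2]⟩
  map_add' f g := by
    funext t
    simp only [Pi.add_apply, mul_add, Finset.sum_add_distrib]
  map_smul' c f := by
    funext t
    simp only [Pi.smul_apply, smul_eq_mul, RingHom.id_apply, Finset.mul_sum]
    exact Finset.sum_congr rfl fun v _ => by ring

/-- The range of the previous coboundary (interpreted as `⊥` in lowest degree). -/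
noncomputable def prevRange (K : SCpx V) : (d : ℕ) → Submodule ℚ (cochain K d)
  | 0 => ⊥
  | (d + 1) => LinearMap.range (delta K d)

/-- Reduced simplicial cohomology over `ℚ` in shifted indexing:
`Hq K d` is `H̃^{d-1}(K; ℚ)`. -/
abbrev Hq (K : SCpx V) (d : ℕ) :=
  ↥(LinearMap.ker (delta K d)) ⧸
    (prevRange K d).comap (LinearMap.ker (delta K d)).subtype

/-- `reducedBetti K r = dim_ℚ H̃^r(K; ℚ)`. -/
noncomputable def reducedBetti (K : SCpx V) (r : ℤ) : ℕ :=
  if r < -1 then 0 else Module.finrank ℚ (Hq K (r + 1).toNat)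

/-!
Rank–nullity gives `∑ dim H̃ + 2 ∑ rank δ = #faces`, so `∑ dim H̃ ≤ 1` as soon as all faces
but one are paired off by a matching whose lower faces have independent coboundaries.
Repeatedly remove from a forest a leaf `v` together with the closed neighbourhood of its
neighbour `u`, or stop at an isolated vertex `v = u`; this gives pairs `(u i, v i)`. A face
whose first missing `u i` has `v i ∉ σ` is matched with `σ ∪ {v i}`. At most the face
`{u 0, u 1, …}` stays unmatched, and the matching is triangular with respect to that index `i`,
so the coboundaries of the matched faces are linearly independent (algebraic discrete Morse
theory).
-/

theorem linearIndependent_of_triangular {ι κ R α : Type*} [Ring R] [NoZeroDivisors R]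
    [LinearOrder α] (w : ι → κ → R) (τ : ι → κ) (lev : ι → α) (hdiag : ∀ i, w i (τ i) ≠ 0)
    (htri : ∀ i j, j ≠ i → w j (τ i) ≠ 0 → lev j < lev i) :
    LinearIndependent R w := by
  classical
  rw [linearIndependent_iff']
  intro s g hsum
  by_contra! hne
  obtain ⟨i, hi, hmin⟩ := (s.filter (g · ≠ 0)).exists_min_image lev
    (by simpa [Finset.Nonempty] using hne)
  rw [mem_filter] at hi
  have hcoord := congrFun hsum (τ i)
  rw [Finset.sum_apply, Finset.sum_eq_single i] at hcoord
  · exact mul_ne_zero hi.2 (hdiag i) hcoord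
  · intro j hj hji
    by_cases hgj : g j = 0
    · simp [hgj]
    have hw : w j (τ i) = 0 := by
      by_contra hw
      exact (htri i j hji hw).not_ge (hmin j (mem_filter.2 ⟨hj, hgj⟩))
    simp [hw]
  · exact fun h => absurd hi.1 h

theorem eq_zero_or_exists_eq_one_of_sum_le_one {ι : Type*} (f : ι → ℕ) (s : Finset ι)
    (hs : ∀ i ∉ s, f i = 0) (h : ∑ i ∈ s, f i ≤ 1) :
    (∀ i, f i = 0) ∨ ∃ k, f k = 1 ∧ ∀ i, i ≠ k → f i = 0 := by
  by_cases h0 : ∀ i, f i = 0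
  · exact Or.inl h0
  push Not at h0
  obtain ⟨k, hk⟩ := h0
  have hks : k ∈ s := by_contra fun hks => hk (hs k hks)
  have hk1 : f k ≤ 1 := (single_le_sum (fun _ _ => Nat.zero_le _) hks).trans h
  refine Or.inr ⟨k, by omega, fun i hik => ?_⟩
  by_cases his : i ∈ s
  · have := (add_le_sum (fun _ _ => Nat.zero_le _) his hks hik).trans h
    omega
  · exact hs i his

omit [DecidableEq V] in
lemma ordV_injective : Function.Injective (ordV (V := V)) := fun _ _ h =>
  (Fintype.equivFin V).injective (Fin.ext h)

noncomputable def faceSign (t : Finset V) (x : V) : ℚ :=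
  (-1) ^ #{w ∈ t | ordV w < ordV x}

omit [DecidableEq V] in
lemma faceSign_ne_zero (t : Finset V) (x : V) : faceSign t x ≠ 0 :=
  pow_ne_zero _ (neg_ne_zero.2 one_ne_zero)

lemma faceSign_mul_faceSign_erase_of_lt {t : Finset V} {x y : V} (hx : x ∈ t)
    (h : ordV x < ordV y) :
    faceSign t x * faceSign (t.erase x) y = -(faceSign t y * faceSign (t.erase y) x) := by
  have hxy : x ∈ {w ∈ t | ordV w < ordV y} := mem_filter.2 ⟨hx, h⟩
  have hyx : y ∉ {w ∈ t | ordV w < ordV x} := by simp [h.le.not_gt]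
  have hcard := card_erase_add_one hxy
  rw [← filter_erase] at hcard
  simp only [faceSign, filter_erase, erase_eq_of_notMem hyx, ← hcard, pow_succ]
  ring

lemma faceSign_mul_faceSign_erase_comm {t : Finset V} {x y : V} (hx : x ∈ t) (hy : y ∈ t)
    (hxy : x ≠ y) :
    faceSign t x * faceSign (t.erase x) y = -(faceSign t y * faceSign (t.erase y) x) := by
  rcases lt_trichotomy (ordV x) (ordV y) with h | h | h
  · exact faceSign_mul_faceSign_erase_of_lt hx h
  · exact absurd (ordV_injective h) hxy
  · rw [faceSign_mul_faceSign_erase_of_lt hy h, neg_neg]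

open scoped Classical in
/-- Extension by zero, so that the coboundary can be written without membership proofs. -/
noncomputable def cochainExt {K : SCpx V} {d : ℕ} (f : cochain K d) (s : Finset V) : ℚ :=
  if h : s ∈ K.faces ∧ s.card = d then f ⟨s, h⟩ else 0

omit [Fintype V] [DecidableEq V] in
lemma cochainExt_of_mem {K : SCpx V} {d : ℕ} (f : cochain K d) {s : Finset V}
    (h : s ∈ K.faces ∧ s.card = d) : cochainExt f s = f ⟨s, h⟩ := dif_pos h

lemma delta_apply (K : SCpx V) (d : ℕ) (f : cochain K d)
    (t : {s : Finset V // s ∈ K.faces ∧ s.card = d + 1}) :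
    delta K d f t = ∑ x ∈ t.1, faceSign t.1 x * cochainExt f (t.1.erase x) := by
  rw [← sum_attach t.1]
  refine sum_congr rfl fun x _ => ?_
  rw [cochainExt_of_mem]
  rfl

omit [Fintype V] in
lemma erase_mem_faces {K : SCpx V} {d : ℕ} (t : {s : Finset V // s ∈ K.faces ∧ s.card = d + 1})
    {x : V} (hx : x ∈ t.1) : t.1.erase x ∈ K.faces ∧ (t.1.erase x).card = d :=
  ⟨K.down _ _ (erase_subset _ _) t.2.1, by simp [card_erase_of_mem hx, t.2.2]⟩

theorem delta_delta (K : SCpx V) (d : ℕ) (f : cochain K d) :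
    delta K (d + 1) (delta K d f) = 0 := by
  funext t
  let g : V → V → ℚ := fun x y =>
    faceSign t.1 x * faceSign (t.1.erase x) y * cochainExt f ((t.1.erase x).erase y)
  have hS : delta K (d + 1) (delta K d f) t = ∑ x ∈ t.1, ∑ y ∈ t.1.erase x, g x y := by
    rw [delta_apply]
    refine sum_congr rfl fun x hx => ?_
    rw [cochainExt_of_mem _ (erase_mem_faces t hx), delta_apply, mul_sum]
    exact sum_congr rfl fun y _ => (mul_assoc _ _ _).symm
  -- swapping the two erased vertices changes the sign of every term
  have hanti : ∑ x ∈ t.1, ∑ y ∈ t.1.erase x, g x y = -∑ x ∈ t.1, ∑ y ∈ t.1.erase x, g x y := by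
    conv_lhs => rw [sum_comm' (t' := t.1) (s' := t.1.erase) (fun x y => by
      simp only [mem_erase, ne_comm]; tauto)]
    rw [← sum_neg_distrib]
    refine sum_congr rfl fun y hy => ?_
    rw [← sum_neg_distrib]
    refine sum_congr rfl fun x hx => ?_
    simp only [g]
    rw [faceSign_mul_faceSign_erase_comm (mem_of_mem_erase hx) hy (ne_of_mem_erase hx),
      erase_right_comm]
    ring
  rw [hS, Pi.zero_apply]
  linarith

open scoped Classical in
noncomputable def SCpx.faceFinset (K : SCpx V) : Finset (Finset V) := {s | s ∈ K.faces}

omit [DecidableEq V] in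
lemma SCpx.mem_faceFinset {K : SCpx V} {s : Finset V} : s ∈ K.faceFinset ↔ s ∈ K.faces := by
  classical
  simp [SCpx.faceFinset]

noncomputable instance (K : SCpx V) (d : ℕ) :
    Fintype {s : Finset V // s ∈ K.faces ∧ s.card = d} :=
  Fintype.ofFinite _

omit [DecidableEq V] in
lemma finrank_cochain (K : SCpx V) (d : ℕ) :
    Module.finrank ℚ (cochain K d) = #{s ∈ K.faceFinset | s.card = d} := by
  classical
  rw [Module.finrank_fintype_fun_eq_card, Fintype.card_subtype]
  congr 1
  ext s
  simp [SCpx.mem_faceFinset]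

omit [DecidableEq V] in
lemma subsingleton_cochain (K : SCpx V) {d : ℕ} (hd : Fintype.card V < d) :
    Subsingleton (cochain K d) :=
  ⟨fun _ _ => funext fun s => absurd (s.2.2 ▸ card_le_univ s.1) hd.not_ge⟩

lemma prevRange_le_ker (K : SCpx V) : ∀ d, prevRange K d ≤ LinearMap.ker (delta K d)
  | 0 => bot_le
  | _ + 1 => by
    rintro _ ⟨f, rfl⟩
    exact delta_delta K _ f

lemma finrank_Hq_add_finrank_prevRange (K : SCpx V) (d : ℕ) :
    Module.finrank ℚ (Hq K d) + Module.finrank ℚ (prevRange K d) =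
      Module.finrank ℚ (LinearMap.ker (delta K d)) := by
  rw [← (Submodule.comapSubtypeEquivOfLe (prevRange_le_ker K d)).finrank_eq]
  exact Submodule.finrank_quotient_add_finrank _

lemma finrank_Hq_eq_zero (K : SCpx V) {d : ℕ} (hd : Fintype.card V < d) :
    Module.finrank ℚ (Hq K d) = 0 := by
  have := subsingleton_cochain K hd
  exact Module.finrank_zero_of_subsingleton

theorem sum_finrank_Hq_add_two_mul_sum_finrank_range (K : SCpx V) :
    ∑ d ∈ range (Fintype.card V + 2), Module.finrank ℚ (Hq K d) +
      2 * ∑ d ∈ range (Fintype.card V + 1), Module.finrank ℚ (LinearMap.range (delta K d)) =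
      #K.faceFinset := by
  set N := Fintype.card V
  have hfaces : #K.faceFinset = ∑ d ∈ range (N + 2), #{s ∈ K.faceFinset | s.card = d} :=
    card_eq_sum_card_fiberwise fun s _ => by
      have := card_le_univ s
      simp only [coe_range, Set.mem_Iio]
      omega
  have hcochain : ∑ d ∈ range (N + 2), #{s ∈ K.faceFinset | s.card = d} =
      ∑ d ∈ range (N + 2), Module.finrank ℚ (LinearMap.range (delta K d)) +
        ∑ d ∈ range (N + 2), Module.finrank ℚ (LinearMap.ker (delta K d)) := by
    rw [← sum_add_distrib]
    exact sum_congr rfl fun d _ => by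
      rw [← finrank_cochain, LinearMap.finrank_range_add_finrank_ker]
  have hker : ∑ d ∈ range (N + 2), Module.finrank ℚ (LinearMap.ker (delta K d)) =
      ∑ d ∈ range (N + 2), Module.finrank ℚ (Hq K d) +
        ∑ d ∈ range (N + 2), Module.finrank ℚ (prevRange K d) := by
    rw [← sum_add_distrib]
    exact sum_congr rfl fun d _ => (finrank_Hq_add_finrank_prevRange K d).symm
  have hprev : ∑ d ∈ range (N + 2), Module.finrank ℚ (prevRange K d) =
      ∑ d ∈ range (N + 1), Module.finrank ℚ (LinearMap.range (delta K d)) := by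
    have h0 : Module.finrank ℚ (prevRange K 0) = 0 := finrank_bot _ _
    rw [sum_range_succ', h0, add_zero]
    rfl
  have hlast : Module.finrank ℚ (LinearMap.range (delta K (N + 1))) = 0 := by
    have := subsingleton_cochain K (d := N + 2) (by omega)
    exact Module.finrank_zero_of_subsingleton
  have hrange : ∑ d ∈ range (N + 2), Module.finrank ℚ (LinearMap.range (delta K d)) =
      ∑ d ∈ range (N + 1), Module.finrank ℚ (LinearMap.range (delta K d)) +
        Module.finrank ℚ (LinearMap.range (delta K (N + 1))) :=
    sum_range_succ _ _
  omega

omit [Fintype V] in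
lemma cochainExt_single {K : SCpx V} {d : ℕ} (σ : {s : Finset V // s ∈ K.faces ∧ s.card = d})
    (s : Finset V) : cochainExt (Pi.single σ (1 : ℚ)) s = if s = σ.1 then 1 else 0 := by
  classical
  by_cases hs : s = σ.1
  · subst hs
    rw [cochainExt_of_mem _ σ.2, if_pos rfl]
    exact Pi.single_eq_same _ _
  · rw [if_neg hs]
    by_cases h : s ∈ K.faces ∧ s.card = d
    · rw [cochainExt_of_mem _ h]
      exact Pi.single_eq_of_ne (fun h' => hs (congrArg Subtype.val h')) _
    · exact dif_neg h

lemma exists_erase_eq_of_delta_single_ne_zero {K : SCpx V} {d : ℕ}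
    {σ : {s : Finset V // s ∈ K.faces ∧ s.card = d}}
    {t : {s : Finset V // s ∈ K.faces ∧ s.card = d + 1}}
    (h : delta K d (Pi.single σ 1) t ≠ 0) : ∃ x ∈ t.1, t.1.erase x = σ.1 := by
  rw [delta_apply] at h
  obtain ⟨x, hx, hne⟩ := exists_ne_zero_of_sum_ne_zero h
  rw [cochainExt_single] at hne
  exact ⟨x, hx, by_contra fun h' => hne (by rw [if_neg h', mul_zero])⟩

lemma delta_single_apply_insert_ne_zero {K : SCpx V} {d : ℕ}
    {σ : {s : Finset V // s ∈ K.faces ∧ s.card = d}} {x : V} (hx : x ∉ σ.1)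
    (t : {s : Finset V // s ∈ K.faces ∧ s.card = d + 1}) (ht : t.1 = insert x σ.1) :
    delta K d (Pi.single σ 1) t ≠ 0 := by
  rw [delta_apply, sum_eq_single x]
  · rw [cochainExt_single, ht, erase_insert hx, if_pos rfl, mul_one]
    exact faceSign_ne_zero _ _
  · intro y hy hyx
    rw [cochainExt_single, if_neg, mul_zero]
    intro hσ
    rw [ht] at hy hσ
    exact hx (hσ ▸ mem_erase.2 ⟨Ne.symm hyx, mem_insert_self x σ.1⟩)
  · exact fun h => absurd (ht ▸ mem_insert_self x σ.1) h

/-- Algebraic discrete Morse theory, for a matching `σ ↦ insert (up σ) σ` that is triangular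
with respect to `lev`. -/
theorem card_filter_card_le_finrank_range_delta (K : SCpx V) (d : ℕ) (L : Finset (Finset V))
    (lev : Finset V → ℕ) (up : Finset V → V) (hL : ∀ σ ∈ L, σ ∈ K.faces)
    (hup : ∀ σ ∈ L, up σ ∉ σ ∧ insert (up σ) σ ∈ K.faces)
    (hlev : ∀ σ ∈ L, ∀ b ∈ σ, (insert (up σ) σ).erase b ∈ L →
      lev ((insert (up σ) σ).erase b) < lev σ) :
    #{σ ∈ L | σ.card = d} ≤ Module.finrank ℚ (LinearMap.range (delta K d)) := by
  set L' := {σ ∈ L | σ.card = d}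
  have hL' : ∀ σ : L', σ.1 ∈ L ∧ σ.1.card = d := fun σ => mem_filter.1 σ.2
  let face (σ : L') : {s : Finset V // s ∈ K.faces ∧ s.card = d} :=
    ⟨σ.1, hL _ (hL' σ).1, (hL' σ).2⟩
  let coface (σ : L') : {s : Finset V // s ∈ K.faces ∧ s.card = d + 1} :=
    ⟨insert (up σ.1) σ.1, (hup _ (hL' σ).1).2,
      by rw [card_insert_of_notMem (hup _ (hL' σ).1).1, (hL' σ).2]⟩
  let w (σ : L') : LinearMap.range (delta K d) :=
    ⟨delta K d (Pi.single (face σ) 1), LinearMap.mem_range_self _ _⟩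
  have hw : LinearIndependent ℚ w := by
    refine LinearIndependent.of_comp (LinearMap.range (delta K d)).subtype
      (linearIndependent_of_triangular _ coface (fun σ => lev σ.1)
        (fun σ => delta_single_apply_insert_ne_zero (hup _ (hL' σ).1).1 _ rfl) ?_)
    intro σ τ hτσ hne
    obtain ⟨x, hx, hxτ⟩ := exists_erase_eq_of_delta_single_ne_zero hne
    rcases mem_insert.1 hx with rfl | hxσ
    · have hτ : τ.1 = σ.1 := hxτ.symm.trans (erase_insert (hup _ (hL' σ).1).1)
      exact absurd (Subtype.ext hτ) hτσ
    · have := hlev _ (hL' σ).1 x hxσ (hxτ ▸ (hL' τ).1)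
      rwa [hxτ] at this
  simpa using hw.fintype_card_le_finrank

theorem sum_finrank_Hq_le_one_of_matching (K : SCpx V) (L : Finset (Finset V))
    (lev : Finset V → ℕ) (up : Finset V → V) (c₀ : Finset V) (hL : ∀ σ ∈ L, σ ∈ K.faces)
    (hup : ∀ σ ∈ L, up σ ∉ σ ∧ insert (up σ) σ ∈ K.faces)
    (hlev : ∀ σ ∈ L, ∀ b ∈ σ, (insert (up σ) σ).erase b ∈ L →
      lev ((insert (up σ) σ).erase b) < lev σ)
    (hcover : ∀ c ∈ K.faces, c ∈ L ∨ c = c₀ ∨ ∃ σ ∈ L, insert (up σ) σ = c) :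
    ∑ d ∈ range (Fintype.card V + 2), Module.finrank ℚ (Hq K d) ≤ 1 := by
  have hfaces : #K.faceFinset ≤ 2 * #L + 1 := by
    have hsub : K.faceFinset ⊆ L ∪ L.image (fun σ => insert (up σ) σ) ∪ {c₀} := by
      intro c hc
      rcases hcover c (SCpx.mem_faceFinset.1 hc) with h | rfl | ⟨σ, hσ, rfl⟩
      · simp [h]
      · simp
      · exact mem_union_left _ (mem_union_right _ (mem_image_of_mem _ hσ))
    calc #K.faceFinset ≤ #(L ∪ L.image (fun σ => insert (up σ) σ) ∪ {c₀}) := card_le_card hsub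
      _ ≤ #L + #L + 1 := by
        grw [card_union_le, card_union_le, card_image_le, card_singleton]
      _ = 2 * #L + 1 := by ring
  have hrank : #L ≤ ∑ d ∈ range (Fintype.card V + 1),
      Module.finrank ℚ (LinearMap.range (delta K d)) := by
    rw [card_eq_sum_card_fiberwise (f := card) (t := range (Fintype.card V + 1)) fun σ _ => by
      simpa [Nat.lt_succ_iff] using card_le_univ σ]
    exact sum_le_sum fun d _ => card_filter_card_le_finrank_range_delta K d L lev up hL hup hlev
  have := sum_finrank_Hq_add_two_mul_sum_finrank_range K
  omega

theorem reducedBetti_eq_zero_or_exists_eq_one (K : SCpx V)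
    (hK : ∑ d ∈ range (Fintype.card V + 2), Module.finrank ℚ (Hq K d) ≤ 1) :
    (∀ r : ℤ, reducedBetti K r = 0) ∨
      ∃ k : ℤ, reducedBetti K k = 1 ∧ ∀ r : ℤ, r ≠ k → reducedBetti K r = 0 := by
  rcases eq_zero_or_exists_eq_one_of_sum_le_one (fun d => Module.finrank ℚ (Hq K d)) _
    (fun d hd => finrank_Hq_eq_zero K (by simp at hd; omega)) hK with h0 | ⟨k, hk, hne⟩
  · left
    intro r
    unfold reducedBetti
    split_ifs
    exacts [rfl, h0 _]
  · right
    have hk' : ¬((k : ℤ) - 1 < -1) := by omega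
    refine ⟨k - 1, by rwa [reducedBetti, if_neg hk', sub_add_cancel, Int.toNat_natCast],
      fun r hr => ?_⟩
    unfold reducedBetti
    split_ifs
    exacts [rfl, hne _ (by omega)]

section Forest

variable {α : Type*} {F : SimpleGraph α}

theorem SimpleGraph.IsAcyclic.exists_neighborSet_subsingleton {G : SimpleGraph α} [Finite α]
    [Nonempty α] (hG : G.IsAcyclic) : ∃ a, (G.neighborSet a).Subsingleton := by
  obtain ⟨a, b, p, hp, hmax⟩ := SimpleGraph.Walk.exists_isPath_forall_isPath_length_le_length G
  -- a neighbour of the start of a longest path lies on it, hence is its second vertex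
  have hsnd : ∀ w, G.Adj a w → w = p.snd := fun w hw => by
    refine hG.eq_snd_of_adj_start hp hw (by_contra fun hwp => ?_)
    have := hmax _ _ _ (hp.cons (h := hw.symm) hwp)
    simp at this
  exact ⟨a, fun w hw w' hw' => (hsnd w hw).trans (hsnd w' hw').symm⟩

/-- `v i` is a leaf with neighbour `u i`, or an isolated vertex `v i = u i`, of the graph induced
on what is left of `W` after deleting the closed neighbourhoods of `u 0, …, u (i - 1)`; the
sequence stops at an isolated vertex or when nothing is left. -/
structure IsLeafSeq (F : SimpleGraph α) (W : Finset α) (m : ℕ) (u v : ℕ → α) : Prop where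
  mem : ∀ i < m, u i ∈ W ∧ v i ∈ W
  fresh : ∀ i < m, ∀ l < i, u i ≠ u l ∧ v i ≠ u l ∧ ¬F.Adj (u l) (v i)
  leaf : ∀ i < m, ∀ w ∈ W, F.Adj (v i) w → w = u i ∨ ∃ l < i, w = u l ∨ F.Adj (u l) w
  loop_last : ∀ i < m, v i = u i → i + 1 = m
  cover : (∃ l < m, v l = u l) ∨ ∀ x ∈ W, ∃ l < m, x = u l ∨ F.Adj (u l) x

lemma isLeafSeq_empty (u v : ℕ → α) : IsLeafSeq F ∅ 0 u v where
  mem := by simp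
  fresh := by simp
  leaf := by simp
  loop_last := by simp
  cover := by simp

lemma isLeafSeq_isolated {W : Finset α} {z : α} (hz : z ∈ W) (hiso : ∀ w ∈ W, ¬F.Adj z w) :
    IsLeafSeq F W 1 (fun _ => z) (fun _ => z) where
  mem _ _ := ⟨hz, hz⟩
  fresh _ _ _ hl := absurd hl (by omega)
  leaf _ _ w hw hadj := absurd hadj (hiso w hw)
  loop_last _ hi _ := by omega
  cover := Or.inl ⟨0, one_pos, rfl⟩

lemma IsLeafSeq.cons [DecidableEq α] [DecidableRel F.Adj] {W : Finset α} {m : ℕ} {u v : ℕ → α}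
    {a b : α} (ha : a ∈ W) (hb : b ∈ W) (hab : F.Adj a b) (hleaf : ∀ w ∈ W, F.Adj a w → w = b)
    (h : IsLeafSeq F {x ∈ W | x ≠ b ∧ ¬F.Adj b x} m u v) :
    IsLeafSeq F W (m + 1) (fun | 0 => b | i + 1 => u i) (fun | 0 => a | i + 1 => v i) where
  mem
    | 0, _ => ⟨hb, ha⟩
    | i + 1, hi => by
      obtain ⟨hu, hv⟩ := h.mem i (by omega)
      exact ⟨(mem_filter.1 hu).1, (mem_filter.1 hv).1⟩
  fresh
    | 0, _, l, hl => absurd hl (by omega)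
    | i + 1, hi, 0, _ => by
      obtain ⟨hu, hv⟩ := h.mem i (by omega)
      exact ⟨(mem_filter.1 hu).2.1, (mem_filter.1 hv).2.1, (mem_filter.1 hv).2.2⟩
    | i + 1, hi, l + 1, hl => h.fresh i (by omega) l (by omega)
  leaf
    | 0, _, w, hw, hadj => Or.inl (hleaf w hw hadj)
    | i + 1, hi, w, hw, hadj => by
      by_cases hw' : w ∈ {x ∈ W | x ≠ b ∧ ¬F.Adj b x}
      · rcases h.leaf i (by omega) w hw' hadj with h' | ⟨l, hl, h'⟩
        · exact Or.inl h'
        · exact Or.inr ⟨l + 1, by omega, h'⟩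
      · simp only [mem_filter, hw, true_and, not_and_or, not_not, ne_eq] at hw'
        exact Or.inr ⟨0, by omega, hw'⟩
  loop_last
    | 0, _, hab' => absurd hab' hab.ne
    | i + 1, hi, hvu => by
      have := h.loop_last i (by omega) hvu
      omega
  cover := by
    rcases h.cover with ⟨l, hl, hvu⟩ | hcov
    · exact Or.inl ⟨l + 1, by omega, hvu⟩
    · refine Or.inr fun x hx => ?_
      by_cases hx' : x ∈ {x ∈ W | x ≠ b ∧ ¬F.Adj b x}
      · obtain ⟨l, hl, h'⟩ := hcov x hx'
        exact ⟨l + 1, by omega, h'⟩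
      · simp only [mem_filter, hx, true_and, not_and_or, not_not, ne_eq] at hx'
        exact ⟨0, by omega, hx'⟩

theorem exists_isLeafSeq [Nonempty α] (hF : F.IsAcyclic) (W : Finset α) :
    ∃ m u v, IsLeafSeq F W m u v := by
  classical
  induction W using Finset.strongInduction with
  | H W ih =>
  rcases W.eq_empty_or_nonempty with rfl | hW
  · exact ⟨0, _, _, isLeafSeq_empty (fun _ => Classical.arbitrary α) (fun _ => Classical.arbitrary α)⟩
  have : Nonempty W := hW.to_subtype
  obtain ⟨⟨a, ha⟩, hsub⟩ := (hF.induce (W : Set α)).exists_neighborSet_subsingleton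
  have hnbr : ∀ w ∈ W, ∀ w' ∈ W, F.Adj a w → F.Adj a w' → w = w' := fun w hw w' hw' h h' =>
    congrArg Subtype.val (hsub (x := ⟨w, hw⟩) (y := ⟨w', hw'⟩) h h')
  by_cases hiso : ∀ w ∈ W, ¬F.Adj a w
  · exact ⟨1, _, _, isLeafSeq_isolated ha hiso⟩
  push Not at hiso
  obtain ⟨b, hb, hab⟩ := hiso
  obtain ⟨m, u, v, h⟩ := ih {x ∈ W | x ≠ b ∧ ¬F.Adj b x}
    (filter_ssubset.2 ⟨b, hb, by simp⟩)
  exact ⟨m + 1, _, _, h.cons ha hb hab fun w hw haw => hnbr w hw b hb haw hab⟩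


variable [DecidableEq α] {m : ℕ} {u v : ℕ → α} {σ : Finset α}

def level (m : ℕ) (u : ℕ → α) (σ : Finset α) : ℕ :=
  Nat.find (⟨m, .inl rfl⟩ : ∃ i, i = m ∨ u i ∉ σ)

lemma level_le : level m u σ ≤ m :=
  Nat.find_min' _ (.inl rfl)

lemma level_le_of_notMem {i : ℕ} (h : u i ∉ σ) : level m u σ ≤ i :=
  Nat.find_min' _ (.inr h)

lemma le_level {i : ℕ} (hi : i ≤ m) (h : ∀ l < i, u l ∈ σ) : i ≤ level m u σ :=
  (Nat.le_find_iff _ _).2 fun l hl => by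
    push Not
    exact ⟨by omega, h l hl⟩

lemma mem_of_lt_level {l : ℕ} (hl : l < level m u σ) : u l ∈ σ := by
  have := Nat.find_min _ hl
  push Not at this
  exact this.2

lemma notMem_of_level_lt (h : level m u σ < m) : u (level m u σ) ∉ σ :=
  (Nat.find_spec (⟨m, .inl rfl⟩ : ∃ i, i = m ∨ u i ∉ σ)).resolve_left h.ne

/-- The faces matched upwards, with `insert (v (level m u σ)) σ`. -/
def IsMatchedUp (m : ℕ) (u v : ℕ → α) (σ : Finset α) : Prop :=
  level m u σ < m ∧ v (level m u σ) ∉ σ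

lemma insert_mem_indepCpx {s : Finset α} {x : α} (hs : s ∈ (indepCpx F).faces)
    (hx : ∀ w ∈ s, ¬F.Adj x w) : insert x s ∈ (indepCpx F).faces := by
  intro a ha b hb
  rcases mem_insert.1 ha with rfl | ha' <;> rcases mem_insert.1 hb with rfl | hb'
  · exact F.irrefl
  · exact hx b hb'
  · exact fun h => hx a ha' h.symm
  · exact hs a ha' b hb'

lemma IsLeafSeq.insert_mem_indepCpx [Fintype α] (h : IsLeafSeq F univ m u v)
    (hσ : σ ∈ (indepCpx F).faces) (hup : IsMatchedUp m u v σ) :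
    insert (v (level m u σ)) σ ∈ (indepCpx F).faces := by
  refine _root_.insert_mem_indepCpx hσ fun w hw hadj => ?_
  rcases h.leaf _ hup.1 w (mem_univ w) hadj with rfl | ⟨l, hl, rfl | hadj'⟩
  · exact notMem_of_level_lt hup.1 hw
  · exact (h.fresh _ hup.1 l hl).2.2 hadj.symm
  · exact hσ _ (mem_of_lt_level hl) w hw hadj'

lemma IsLeafSeq.level_erase_insert_lt {W : Finset α} (h : IsLeafSeq F W m u v)
    (hup : IsMatchedUp m u v σ) {b : α} (hb : b ∈ σ)
    (hρ : IsMatchedUp m u v ((insert (v (level m u σ)) σ).erase b)) :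
    level m u ((insert (v (level m u σ)) σ).erase b) < level m u σ := by
  set i := level m u σ
  set ρ := (insert (v i) σ).erase b
  by_cases hbu : ∃ l < i, b = u l
  · obtain ⟨l, hl, rfl⟩ := hbu
    exact (level_le_of_notMem (notMem_erase _ _)).trans_lt hl
  push Not at hbu
  have hvρ : v i ∈ ρ := mem_erase.2 ⟨fun hvb => hup.2 (hvb ▸ hb), mem_insert_self _ _⟩
  have hiρ : i ≤ level m u ρ := le_level hup.1.le fun l hl =>
    mem_erase.2 ⟨(hbu l hl).symm, mem_insert_of_mem (mem_of_lt_level hl)⟩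
  rcases hiρ.eq_or_lt with heq | hlt
  · exact absurd (heq ▸ hvρ) hρ.2
  -- past level `i` the face contains `u i`, which forces `v i = u i`, the last pair
  have hvu : v i = u i := by
    rcases mem_insert.1 (mem_of_mem_erase (mem_of_lt_level hlt)) with h' | h'
    · exact h'.symm
    · exact absurd h' (notMem_of_level_lt hup.1)
  have := h.loop_last i hup.1 hvu
  have := hρ.1
  omega

lemma IsLeafSeq.cover_faces [Fintype α] (h : IsLeafSeq F univ m u v) {c : Finset α}
    (hc : c ∈ (indepCpx F).faces) :
    IsMatchedUp m u v c ∨ c = (range m).image u ∨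
      ∃ σ ∈ (indepCpx F).faces, IsMatchedUp m u v σ ∧ insert (v (level m u σ)) σ = c := by
  have hdown : ∀ x, c.erase x ∈ (indepCpx F).faces := fun x =>
    (indepCpx F).down _ _ (erase_subset _ _) hc
  by_cases hlt : level m u c < m
  · set i := level m u c
    by_cases hv : v i ∉ c
    · exact Or.inl ⟨hlt, hv⟩
    push Not at hv
    have hlev : level m u (c.erase (v i)) = i := le_antisymm
      (level_le_of_notMem fun hu => notMem_of_level_lt hlt (mem_of_mem_erase hu))
      (le_level hlt.le fun l hl =>
        mem_erase.2 ⟨(h.fresh i hlt l hl).2.1.symm, mem_of_lt_level hl⟩)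
    refine Or.inr (Or.inr ⟨c.erase (v i), hdown _, ?_, ?_⟩)
    · rw [IsMatchedUp, hlev]
      exact ⟨hlt, notMem_erase _ _⟩
    · rw [hlev]
      exact insert_erase hv
  have hall : ∀ l < m, u l ∈ c := fun l hl => mem_of_lt_level (m := m) (by omega)
  rcases h.cover with ⟨l, hl, hvu⟩ | hcov
  · have hlast := h.loop_last l hl hvu
    have hlev : level m u (c.erase (u l)) = l := le_antisymm
      (level_le_of_notMem (notMem_erase _ _))
      (le_level hl.le fun l' hl' =>
        mem_erase.2 ⟨(h.fresh l hl l' hl').1.symm, hall l' (by omega)⟩)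
    refine Or.inr (Or.inr ⟨c.erase (u l), hdown _, ?_, ?_⟩)
    · rw [IsMatchedUp, hlev, hvu]
      exact ⟨hl, notMem_erase _ _⟩
    · rw [hlev, hvu]
      exact insert_erase (hall l hl)
  · refine Or.inr (Or.inl (Subset.antisymm (fun x hx => ?_) (image_subset_iff.2 fun l hl =>
      hall l (mem_range.1 hl))))
    obtain ⟨l, hl, rfl | hadj⟩ := hcov x (mem_univ x)
    · exact mem_image_of_mem _ (mem_range.2 hl)
    · exact absurd hadj (hc _ (hall l hl) x hx)

end Forest

theorem sum_finrank_Hq_indepCpx_le_one {F : SimpleGraph V} (hF : F.IsAcyclic) :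
    ∑ d ∈ range (Fintype.card V + 2), Module.finrank ℚ (Hq (indepCpx F) d) ≤ 1 := by
  classical
  rcases isEmpty_or_nonempty V with hV | hV
  · have := sum_finrank_Hq_add_two_mul_sum_finrank_range (indepCpx F)
    have : #(indepCpx F).faceFinset ≤ 1 := (card_le_univ _).trans (by simp)
    omega
  obtain ⟨m, u, v, h⟩ := exists_isLeafSeq hF univ
  have hL : ∀ {σ}, σ ∈ {σ ∈ (indepCpx F).faceFinset | IsMatchedUp m u v σ} ↔
      σ ∈ (indepCpx F).faces ∧ IsMatchedUp m u v σ := by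
    simp [SCpx.mem_faceFinset]
  refine sum_finrank_Hq_le_one_of_matching _ {σ ∈ (indepCpx F).faceFinset | IsMatchedUp m u v σ}
    (level m u) (fun σ => v (level m u σ)) ((range m).image u) (fun σ hσ => (hL.1 hσ).1)
    (fun σ hσ => ⟨(hL.1 hσ).2.2, h.insert_mem_indepCpx (hL.1 hσ).1 (hL.1 hσ).2⟩)
    (fun σ hσ b hb hρ => h.level_erase_insert_lt (hL.1 hσ).2 hb (hL.1 hρ).2) fun c hc => ?_
  rcases h.cover_faces hc with hup | hc₀ | ⟨σ, hσ, hup, rfl⟩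
  · exact Or.inl (hL.2 ⟨hc, hup⟩)
  · exact Or.inr (Or.inl hc₀)
  · exact Or.inr (Or.inr ⟨σ, hL.2 ⟨hσ, hup⟩, rfl⟩)

/-- **Ehrenborg–Hetyei.** The independence complex of a forest is
contractible or homotopy equivalent to a sphere; in particular its total reduced
cohomology over `ℚ` either vanishes or is one-dimensional, concentrated in a
single degree. -/
theorem stmt6 (F : SimpleGraph V) (hF : F.IsAcyclic) :
    (∀ r : ℤ, reducedBetti (indepCpx F) r = 0) ∨
    (∃ k : ℤ, reducedBetti (indepCpx F) k = 1 ∧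
      ∀ r : ℤ, r ≠ k → reducedBetti (indepCpx F) r = 0) :=
  reducedBetti_eq_zero_or_exists_eq_one _ (sum_finrank_Hq_indepCpx_le_one hF)
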